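/- arXiv:1608.06793 — 3 statements merged into one kernel-verified Lean document; each statement's English description precedes it below -/
import Mathlib

section
/- Let L be a finite-dimensional solvable Lie algebra. If r is the smallest integer such that N_r(L) = L (upper nilpotent series) and s is the smallest integer such that Γ_s(L) = 0 (lower nilpotent series), then Γ_{s-i}(L) ⊆ N_i(L) for i = 0,...,r. -/
/-- The canonical quotient map `L → L ⧸ I` as a morphism of Lie algebras. -/
def lieQuotMk {F L : Type*} [Field F] [LieRing L] [LieAlgebra F L] (I : LieIdeal F L) :
    L →ₗ⁅F⁆ L ⧸ I where
  toLinearMap := (LieSubmodule.Quotient.mk' I).toLinearMap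
  map_lie' := rfl

variable (F : Type*) [Field F]

/-- The nilradical: the largest nilpotent ideal of a (finite-dimensional) Lie algebra. -/
noncomputable def nilrad (L : Type*) [LieRing L] [LieAlgebra F L] : LieIdeal F L :=
  sSup {I : LieIdeal F L | LieRing.IsNilpotent I}

/-- The upper nilpotent series: `N 0 = 0`, `N (i+1) / N i = nilradical of L ⧸ N i`. -/
noncomputable def upperNil (L : Type*) [LieRing L] [LieAlgebra F L] : ℕ → LieIdeal F L
  | 0 => ⊥
  | n + 1 => LieIdeal.comap (lieQuotMk (upperNil L n)) (nilrad F (L ⧸ upperNil L n))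

/-- The nilpotent length: the least `n` with `N n = L`. -/
noncomputable def nilLen (L : Type*) [LieRing L] [LieAlgebra F L] : ℕ :=
  sInf {n : ℕ | upperNil F L n = ⊤}

/-- The nilpotent residual `γ∞(L)`: the smallest ideal with nilpotent quotient. -/
noncomputable def nilResidual (L : Type*) [LieRing L] [LieAlgebra F L] : LieIdeal F L :=
  sInf {I : LieIdeal F L | LieRing.IsNilpotent (L ⧸ I)}

/-- The lower nilpotent series: `Γ 0 = L`, `Γ (i+1) = γ∞(Γ i)`, viewed as subalgebras of `L`. -/
noncomputable def lowerNil (L : Type*) [LieRing L] [LieAlgebra F L] : ℕ → LieSubalgebra F L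
  | 0 => ⊤
  | n + 1 =>
      LieSubalgebra.map (lowerNil L n).incl
        (LieIdeal.toLieSubalgebra F (lowerNil L n) (nilResidual F (lowerNil L n)))

/-- `M` is a maximal (proper) subalgebra of `L`. -/
def IsMaxSub {L : Type*} [LieRing L] [LieAlgebra F L] (M : LieSubalgebra F L) : Prop :=
  M ≠ ⊤ ∧ ∀ K : LieSubalgebra F L, M < K → K = ⊤

/-- The Frattini subalgebra: the intersection of all maximal subalgebras. -/
noncomputable def lieFrattini (L : Type*) [LieRing L] [LieAlgebra F L] : LieSubalgebra F L :=
  sInf {M : LieSubalgebra F L | IsMaxSub F M}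

/-- The core of a subalgebra `U`: the largest ideal of `L` contained in `U`. -/
noncomputable def lieCore {L : Type*} [LieRing L] [LieAlgebra F L] (U : LieSubalgebra F L) :
    LieIdeal F L :=
  sSup {I : LieIdeal F L | (I : Set L) ⊆ (U : Set L)}

/-- `A` is a minimal ideal of `L`. -/
def IsMinIdeal {L : Type*} [LieRing L] [LieAlgebra F L] (A : LieIdeal F L) : Prop :=
  A ≠ ⊥ ∧ ∀ B : LieIdeal F L, B < A → B = ⊥

/-- The Frattini series: `φ i (L) / N (i-1) (L) = φ(L ⧸ N (i-1) (L))` for `i ≥ 1`. -/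
noncomputable def fratSeries (L : Type*) [LieRing L] [LieAlgebra F L] (i : ℕ) :
    LieSubalgebra F L :=
  LieSubalgebra.comap (lieQuotMk (upperNil F L (i - 1)))
    (lieFrattini F (L ⧸ upperNil F L (i - 1)))

/-- `L` is extreme: `N i (L) / φ i (L)` is a chief factor of `L` for each `1 ≤ i ≤ n(L)`. -/
def IsExtremeLie (L : Type*) [LieRing L] [LieAlgebra F L] : Prop :=
  ∀ i, 1 ≤ i → i ≤ nilLen F L →
    (fratSeries F L i : Set L) ⊆ (upperNil F L i : Set L) ∧
    (fratSeries F L i : Set L) ≠ (upperNil F L i : Set L) ∧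
    ∀ C : LieIdeal F L, (fratSeries F L i : Set L) ⊆ (C : Set L) → C ≤ upperNil F L i →
      (C : Set L) = (fratSeries F L i : Set L) ∨ C = upperNil F L i

/-- `L` is supersolvable: it has a chain of ideals with one-dimensional quotients. -/
def IsSupersolvable (L : Type*) [LieRing L] [LieAlgebra F L] : Prop :=
  ∃ (n : ℕ) (C : ℕ → LieIdeal F L), C 0 = ⊥ ∧ C n = ⊤ ∧
    ∀ i < n, C i ≤ C (i + 1) ∧
      Module.finrank F (C (i + 1)) = Module.finrank F (C i) + 1

/-- A minimal ideal `A` is complemented if some maximal subalgebra `M` satisfies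
`L = A + M` and `A ∩ M = 0`. -/
def IsComplementedIdeal {L : Type*} [LieRing L] [LieAlgebra F L] (A : LieIdeal F L) : Prop :=
  ∃ M : LieSubalgebra F L, IsMaxSub F M ∧
    A.toSubmodule ⊔ M.toSubmodule = ⊤ ∧ A.toSubmodule ⊓ M.toSubmodule = ⊥

/-!
Every term `Γ n` is an ideal of `L`: in finite dimension the nilpotent residual is a term of
the lower central series, and the lower central series of an ideal consists of ideals of `L`.
If `Γ (n + 1) ⊆ N i`, the image of `Γ n` in `L ⧸ N i` is an ideal which is a quotient of
`Γ n ⧸ γ∞ (Γ n)`, hence nilpotent, hence contained in the nilradical; so `Γ n ⊆ N (i + 1)`.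
Starting from `Γ s = 0 = N 0`, induction gives `Γ (s - i) ⊆ N i`.
-/

open LieModule

section
variable {F K J : Type*} [Field F] [LieRing K] [LieAlgebra F K] [LieRing J] [LieAlgebra F J]

lemma ker_lieQuotMk (I : LieIdeal F K) : (lieQuotMk I).ker = I := by
  ext x
  exact LieSubmodule.Quotient.mk_eq_zero I

lemma lieQuotMk_surjective (I : LieIdeal F K) : Function.Surjective (lieQuotMk I) :=
  LieSubmodule.Quotient.surjective_mk' I

lemma lowerCentralSeries_eq_bot_iff_le_ker {g : K →ₗ⁅F⁆ J} (hg : Function.Surjective g)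
    (k : ℕ) : lowerCentralSeries F J J k = ⊥ ↔ lowerCentralSeries F K K k ≤ g.ker := by
  rw [← LieIdeal.lowerCentralSeries_map_eq k hg, LieIdeal.map_eq_bot_iff]

lemma LieIdeal.isNilpotent_quotient_iff (I : LieIdeal F K) :
    LieRing.IsNilpotent (K ⧸ I) ↔ ∃ k, lowerCentralSeries F K K k ≤ I := by
  simp only [isNilpotent_iff F,
    lowerCentralSeries_eq_bot_iff_le_ker (lieQuotMk_surjective I), ker_lieQuotMk]

variable [FiniteDimensional F K]

lemma exists_nilResidual_eq_lowerCentralSeries :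
    ∃ k, nilResidual F K = lowerCentralSeries F K K k := by
  obtain ⟨k, hk⟩ := IsArtinian.monotone_stabilizes
    (⟨fun n => LieSubmodule.toSubmodule (lowerCentralSeries F K K n),
      fun _ _ h => (LieSubmodule.toSubmodule_le_toSubmodule _ _).mpr
        (antitone_lowerCentralSeries F K K h)⟩ : ℕ →o (Submodule F K)ᵒᵈ)
  refine ⟨k, le_antisymm (sInf_le (LieIdeal.isNilpotent_quotient_iff _ |>.mpr ⟨k, le_rfl⟩))
    (le_sInf fun I hI => ?_)⟩
  obtain ⟨j, hj⟩ := (LieIdeal.isNilpotent_quotient_iff I).mp hI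
  have hkj : lowerCentralSeries F K K k = lowerCentralSeries F K K (max k j) :=
    (LieSubmodule.toSubmodule_inj _ _).mp (hk _ (le_max_left k j))
  exact hkj ▸ (antitone_lowerCentralSeries F K K (le_max_right k j)).trans hj

lemma isNilpotent_of_nilResidual_le_ker {g : K →ₗ⁅F⁆ J} (hg : Function.Surjective g)
    (h : nilResidual F K ≤ g.ker) : LieRing.IsNilpotent J := by
  obtain ⟨k, hk⟩ := exists_nilResidual_eq_lowerCentralSeries (F := F) (K := K)
  exact (isNilpotent_iff F J J).mpr ⟨k, (lowerCentralSeries_eq_bot_iff_le_ker hg k).mpr (hk ▸ h)⟩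

end

section
variable {F L : Type*} [Field F] [LieRing L] [LieAlgebra F L]

lemma exists_lowerCentralSeries_eq_lie {K : LieSubalgebra F L}
    (hK : ∀ y x : L, x ∈ K → ⁅y, x⁆ ∈ K) (k : ℕ) (y : L) {z : K}
    (hz : z ∈ lowerCentralSeries F K K k) :
    ∃ w ∈ lowerCentralSeries F K K k, (w : L) = ⁅y, (z : L)⁆ := by
  let I : LieIdeal F L := { K.toSubmodule with lie_mem := hK _ _ }
  -- `I.lcs I k` is the `k`-th term of the lower central series of `K`, as an `L`-submodule.
  have hz' : (⟨z, z.2⟩ : I) ∈ I.lcs I k := by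
    rw [← LieSubmodule.mem_toSubmodule, LieIdeal.coe_lcs_eq]
    exact hz
  have hyz : ⁅y, (⟨z, z.2⟩ : I)⁆ ∈ I.lcs I k := (I.lcs I k).lie_mem hz'
  rw [← LieSubmodule.mem_toSubmodule, LieIdeal.coe_lcs_eq] at hyz
  exact ⟨_, hyz, rfl⟩

lemma mem_upperNil_succ_of_nilResidual [FiniteDimensional F L] {K : LieSubalgebra F L}
    (hK : ∀ y x : L, x ∈ K → ⁅y, x⁆ ∈ K) {i : ℕ}
    (h : ∀ w : K, w ∈ nilResidual F K → (w : L) ∈ upperNil F L i) {x : L} (hx : x ∈ K) :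
    x ∈ upperNil F L (i + 1) := by
  let I : LieIdeal F L := { K.toSubmodule with lie_mem := hK _ _ }
  let π := lieQuotMk (upperNil F L i)
  let g : K →ₗ⁅F⁆ I.map π :=
    { toFun := fun w => ⟨π w, LieIdeal.mem_map (show (w : L) ∈ I from w.2)⟩
      map_add' := fun a b => Subtype.ext (π.map_add a b)
      map_smul' := fun c a => Subtype.ext (π.map_smul c a)
      map_lie' := fun {a b} => Subtype.ext (π.map_lie a b) }
  have hg : Function.Surjective g := by
    rintro ⟨_, hy⟩
    obtain ⟨w, rfl⟩ := I.mem_map_of_surjective (lieQuotMk_surjective _) hy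
    exact ⟨⟨w, w.2⟩, rfl⟩
  have hnil : LieRing.IsNilpotent (I.map π) :=
    isNilpotent_of_nilResidual_le_ker hg fun w hw =>
      Subtype.ext ((LieSubmodule.Quotient.mk_eq_zero _).mpr (h w hw))
  show π x ∈ nilrad F _
  exact le_sSup (α := LieIdeal F _) hnil (LieIdeal.mem_map (show x ∈ I from hx))

lemma upperNil_mono : Monotone (upperNil F L) :=
  monotone_nat_of_le_succ fun i =>
    (ker_lieQuotMk (upperNil F L i)).ge.trans (LieIdeal.comap_mono bot_le)

lemma mem_lowerNil_succ {n : ℕ} {x : L} :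
    x ∈ lowerNil F L (n + 1) ↔ ∃ w : lowerNil F L n, w ∈ nilResidual F _ ∧ (w : L) = x :=
  Iff.rfl

variable [FiniteDimensional F L]

lemma lie_mem_lowerNil (n : ℕ) (y : L) {x : L} (hx : x ∈ lowerNil F L n) :
    ⁅y, x⁆ ∈ lowerNil F L n := by
  induction n generalizing y x with
  | zero => exact LieSubalgebra.mem_top _
  | succ n ih =>
    obtain ⟨k, hk⟩ := exists_nilResidual_eq_lowerCentralSeries (F := F) (K := lowerNil F L n)
    obtain ⟨w, hw, rfl⟩ := mem_lowerNil_succ.mp hx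
    obtain ⟨w', hw', hw'_eq⟩ :=
      exists_lowerCentralSeries_eq_lie ih k y (show w ∈ _ from hk ▸ hw)
    exact mem_lowerNil_succ.mpr ⟨w', hk ▸ hw', hw'_eq⟩

lemma mem_upperNil_of_mem_lowerNil {n i : ℕ} (h : lowerNil F L (n + i) = ⊥) {x : L}
    (hx : x ∈ lowerNil F L n) : x ∈ upperNil F L i := by
  induction i generalizing n x with
  | zero =>
    rw [(LieSubalgebra.mem_bot x).mp (h ▸ hx)]
    exact zero_mem _
  | succ i ih =>
    refine mem_upperNil_succ_of_nilResidual (fun y _ => lie_mem_lowerNil n y) (fun w hw => ?_) hx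
    exact ih (n := n + 1) (by rwa [Nat.add_right_comm]) (mem_lowerNil_succ.mpr ⟨w, hw, rfl⟩)

end

theorem stmt0_general {F L : Type*} [Field F] [LieRing L] [LieAlgebra F L]
    [FiniteDimensional F L] (r s : ℕ)
    (hs : lowerNil F L s = ⊥) :
    ∀ i ≤ r, ∀ x : L, x ∈ lowerNil F L (s - i) → x ∈ upperNil F L i := by
  intro i _ x hx
  -- when `s < i`, truncated subtraction makes `s - i = 0`, and `Γ 0 ⊆ N s ⊆ N i`
  have hsi : lowerNil F L (s - i + min s i) = ⊥ := by rwa [Nat.sub_add_min_cancel]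
  exact upperNil_mono (min_le_right s i) (mem_upperNil_of_mem_lowerNil hsi hx)

/-- If `r` is least with `N r (L) = L` and `s` is least with `Γ s (L) = 0`, then
`Γ (s - i) (L) ⊆ N i (L)` for `i = 0, …, r`. -/
theorem stmt0 {F L : Type*} [Field F] [LieRing L] [LieAlgebra F L]
    [FiniteDimensional F L] [LieAlgebra.IsSolvable L] (r s : ℕ)
    (hr : upperNil F L r = ⊤) (hrmin : ∀ m < r, upperNil F L m ≠ ⊤)
    (hs : lowerNil F L s = ⊥) (hsmin : ∀ m < s, lowerNil F L m ≠ ⊥) :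
    ∀ i ≤ r, ∀ x : L, x ∈ lowerNil F L (s - i) → x ∈ upperNil F L i :=
  stmt0_general r s hs
end

section
/- Let L be a finite-dimensional solvable Lie algebra over a field of characteristic p > 2 with φ(L) = 0 (Frattini-free). Then the nilradical N(L) is a characteristic ideal of L, i.e., D(N(L)) ⊆ N(L) for every derivation D of L. -/
variable (F : Type*) [Field F]

/-!
In a `φ`-free Lie algebra every nilpotent ideal `P` is abelian: `P²` lies in every maximal
subalgebra `M`, for otherwise `L = M + P²` gives `P ⊆ M + Pᵏ` for all `k`, hence `P ⊆ M`.
The sum of two abelian ideals is nilpotent of class two, so the nilradical `N` is abelian.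

For an abelian ideal `A` and a derivation `D`, the bracket `⁅a, D b⁆` is symmetric on `A`, and
the Jacobi identity then yields `2 ⁅⁅a, D b⁆, D c⁆ = 0`. With `Z = ⁅A, A + D(A)⁆ ⊆ A` this makes
`A + D(A) ⊇ A + D(Z) ⊇ Z ⊇ 0` a central series, so `A + D(A)` is a nilpotent ideal; for `A = N`
it lies in `N`.
-/

theorem LieSubmodule.lie_toSubmodule_le_iff {R L M : Type*} [CommRing R] [LieRing L]
    [LieAlgebra R L] [AddCommGroup M] [Module R M] [LieRingModule L M] [LieModule R L M]
    {I : LieIdeal R L} {N : LieSubmodule R L M} {S : Submodule R M} :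
    (⁅I, N⁆ : LieSubmodule R L M).toSubmodule ≤ S ↔ ∀ x ∈ I, ∀ m ∈ N, ⁅x, m⁆ ∈ S := by
  rw [LieSubmodule.lieIdeal_oper_eq_linear_span', Submodule.span_le]
  exact ⟨fun h x hx m hm => h ⟨x, hx, m, hm, rfl⟩,
    fun h => by rintro _ ⟨x, hx, m, hm, rfl⟩; exact h x hx m hm⟩

def LieSubalgebra.supIdeal {R L : Type*} [CommRing R] [LieRing L] [LieAlgebra R L]
    (K : LieSubalgebra R L) (I : LieIdeal R L) : LieSubalgebra R L where
  toSubmodule := K.toSubmodule ⊔ I.toSubmodule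
  lie_mem' {x y} hx hy := by
    obtain ⟨k, hk, i, hi, rfl⟩ := Submodule.mem_sup.1 hx
    obtain ⟨k', hk', i', hi', rfl⟩ := Submodule.mem_sup.1 hy
    have hi : i ∈ I := hi
    have hi' : i' ∈ I := hi'
    have hexp : ⁅k + i, k' + i'⁆ = ⁅k, k'⁆ + (⁅k, i'⁆ - ⁅k', i⁆ + ⁅i, i'⁆) := by
      rw [← lie_skew k' i]; simp only [lie_add, add_lie]; abel
    rw [hexp]
    exact Submodule.add_mem_sup (K.lie_mem hk hk')
      (add_mem (sub_mem (I.lie_mem hi') (I.lie_mem hi)) (I.lie_mem hi'))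

namespace LieIdeal

variable {R L : Type*} [CommRing R] [LieRing L] [LieAlgebra R L]

/-- The lower central series `P, ⁅P, P⁆, ⁅P, ⁅P, P⁆⁆, …` of `P` as a Lie algebra in its own
right, realised by ideals of `L`. -/
def selfLcs (P : LieIdeal R L) (k : ℕ) : LieIdeal R L :=
  (fun J => ⁅P, J⁆)^[k] P

variable (P : LieIdeal R L)

@[simp]
theorem selfLcs_zero : P.selfLcs 0 = P :=
  rfl

@[simp]
theorem selfLcs_succ (k : ℕ) : P.selfLcs (k + 1) = ⁅P, P.selfLcs k⁆ :=
  Function.iterate_succ_apply' _ k P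

theorem selfLcs_le_self : ∀ k, P.selfLcs k ≤ P
  | 0 => le_rfl
  | k + 1 => by rw [selfLcs_succ]; exact LieSubmodule.lie_le_left _ _

theorem lowerCentralSeries_eq_comap_selfLcs (k : ℕ) :
    LieModule.lowerCentralSeries R P P k = (P.selfLcs k).comap P.incl := by
  induction k with
  | zero => exact (comap_incl_self P).symm
  | succ k ih =>
    rw [LieModule.lowerCentralSeries_succ, ih, selfLcs_succ, ← comap_incl_self P]
    exact comap_bracket_incl_of_le P le_rfl (P.selfLcs_le_self k)

theorem isNilpotent_iff_exists_selfLcs_eq_bot :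
    LieRing.IsNilpotent P ↔ ∃ k, P.selfLcs k = ⊥ := by
  rw [LieRing.IsNilpotent, LieModule.isNilpotent_iff R]
  refine exists_congr fun k => ?_
  rw [lowerCentralSeries_eq_comap_selfLcs, comap_incl_eq_bot, disjoint_iff,
    inf_eq_right.mpr (P.selfLcs_le_self k)]

theorem selfLcs_two_sup_eq_bot {I J : LieIdeal R L} (hI : ⁅I, I⁆ = ⊥) (hJ : ⁅J, J⁆ = ⊥) :
    (I ⊔ J).selfLcs 2 = ⊥ := by
  have hsq : ⁅I ⊔ J, I ⊔ J⁆ ≤ ⁅I, J⁆ := by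
    simp only [LieSubmodule.lie_sup, LieSubmodule.sup_lie, hI, hJ, LieSubmodule.lie_comm J I]
    simp
  rw [selfLcs_succ, selfLcs_succ, selfLcs_zero, eq_bot_iff]
  calc ⁅I ⊔ J, ⁅I ⊔ J, I ⊔ J⁆⁆ ≤ ⁅I ⊔ J, ⁅I, J⁆⁆ := LieSubmodule.mono_lie_right _ hsq
    _ = ⁅I, ⁅I, J⁆⁆ ⊔ ⁅J, ⁅I, J⁆⁆ := LieSubmodule.sup_lie _ _ _
    _ ≤ ⁅I, I⁆ ⊔ ⁅J, J⁆ :=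
      sup_le_sup (LieSubmodule.mono_lie_right _ (LieSubmodule.lie_le_left _ _))
        (LieSubmodule.mono_lie_right _ (LieSubmodule.lie_le_right _ _))
    _ = ⊥ := by rw [hI, hJ, sup_bot_eq]

theorem lie_eq_bot_iff_le_ker {I J : LieIdeal R L} : ⁅I, J⁆ = ⊥ ↔ I ≤ LieModule.ker R L J := by
  rw [LieSubmodule.lie_eq_bot_iff]
  refine forall₂_congr fun x _ => ?_
  rw [LieModule.mem_ker, Subtype.forall]
  exact forall₂_congr fun m hm => (LieSubmodule.mk_eq_zero _ (J.lie_mem hm)).symm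

theorem sSup_lie_sSup_eq_bot {S : Set (LieIdeal R L)} (h : ∀ I ∈ S, ∀ J ∈ S, ⁅I, J⁆ = ⊥) :
    ⁅sSup S, sSup S⁆ = ⊥ := by
  rw [lie_eq_bot_iff_le_ker]
  refine sSup_le fun I hI => ?_
  rw [← lie_eq_bot_iff_le_ker, LieSubmodule.lie_comm, lie_eq_bot_iff_le_ker]
  exact sSup_le fun J hJ => lie_eq_bot_iff_le_ker.1 (h J hJ I hI)

theorem le_sup_selfLcs_of_le_sup {P : LieIdeal R L} {M : LieSubalgebra R L}
    (h : P.toSubmodule ≤ M.toSubmodule ⊔ (P.selfLcs 1).toSubmodule) (k : ℕ) :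
    P.toSubmodule ≤ M.toSubmodule ⊔ (P.selfLcs (k + 1)).toSubmodule := by
  induction k with
  | zero => exact h
  | succ k ih =>
    refine h.trans (sup_le le_sup_left ?_)
    rw [P.selfLcs_succ, P.selfLcs_zero, LieSubmodule.lie_toSubmodule_le_iff]
    intro a ha b hb
    obtain ⟨m, hm, u, hu, rfl⟩ := Submodule.mem_sup.1 (ih ha)
    obtain ⟨m', hm', v, hv, rfl⟩ := Submodule.mem_sup.1 (ih hb)
    have hu : u ∈ P.selfLcs (k + 1) := hu
    have hv : v ∈ P.selfLcs (k + 1) := hv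
    have hmP : m ∈ P := by simpa using sub_mem ha (P.selfLcs_le_self _ hu)
    have hm'P : m' ∈ P := by simpa using sub_mem hb (P.selfLcs_le_self _ hv)
    have hlie : ∀ {x y : L}, x ∈ P → y ∈ P.selfLcs (k + 1) → ⁅x, y⁆ ∈ P.selfLcs (k + 2) :=
      fun hx hy => by rw [P.selfLcs_succ (k + 1)]; exact LieSubmodule.lie_mem_lie hx hy
    have hexp : ⁅m + u, m' + v⁆ = ⁅m, m'⁆ + (⁅m, v⁆ - ⁅m', u⁆ + ⁅u, v⁆) := by
      rw [← lie_skew m' u]; simp only [lie_add, add_lie]; abel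
    rw [hexp]
    exact Submodule.add_mem_sup (M.lie_mem hm hm')
      (add_mem (sub_mem (hlie hmP hv) (hlie hm'P hu)) (hlie (P.selfLcs_le_self _ hu) hv))

end LieIdeal

section FrattiniFree

variable {F} {L : Type*} [LieRing L] [LieAlgebra F L]

namespace LieIdeal

theorem lie_self_le_of_isMaxSub {P : LieIdeal F L} (hP : LieRing.IsNilpotent P)
    {M : LieSubalgebra F L} (hM : IsMaxSub F M) :
    (⁅P, P⁆ : LieIdeal F L).toSubmodule ≤ M.toSubmodule := by
  by_contra hPM
  have hlt : M < M.supIdeal ⁅P, P⁆ := by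
    refine lt_of_le_of_ne (fun x hx => Submodule.mem_sup_left hx) fun h => hPM ?_
    rw [h]
    exact le_sup_right
  have hsup : ∀ x, x ∈ M.toSubmodule ⊔ (⁅P, P⁆ : LieIdeal F L).toSubmodule := fun x => by
    change x ∈ M.supIdeal ⁅P, P⁆
    rw [hM.2 _ hlt]
    exact LieSubalgebra.mem_top x
  obtain ⟨k, hk⟩ := P.isNilpotent_iff_exists_selfLcs_eq_bot.1 hP
  have hPM' : P.toSubmodule ≤ M.toSubmodule := by
    have h := P.le_sup_selfLcs_of_le_sup (M := M) (fun x _ => hsup x) k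
    rwa [P.selfLcs_succ, hk, LieSubmodule.lie_bot, LieSubmodule.bot_toSubmodule, sup_bot_eq] at h
  exact hPM (((LieSubmodule.toSubmodule_le_toSubmodule _ _).2
    (LieSubmodule.lie_le_left P P)).trans hPM')

theorem lie_self_eq_bot_of_isNilpotent (hphi : lieFrattini F L = ⊥) {P : LieIdeal F L}
    (hP : LieRing.IsNilpotent P) : ⁅P, P⁆ = ⊥ := by
  rw [eq_bot_iff]
  intro x hx
  have hmem : x ∈ lieFrattini F L := by
    rw [← SetLike.mem_coe, lieFrattini, LieSubalgebra.coe_sInf, Set.mem_iInter₂]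
    exact fun M hM => P.lie_self_le_of_isMaxSub hP hM hx
  rw [hphi] at hmem
  exact (LieSubalgebra.mem_bot x).1 hmem

end LieIdeal

theorem lie_nilrad_self_eq_bot (hphi : lieFrattini F L = ⊥) : ⁅nilrad F L, nilrad F L⁆ = ⊥ := by
  refine LieIdeal.sSup_lie_sSup_eq_bot fun I hI J hJ => eq_bot_iff.2 ?_
  have hsup : LieRing.IsNilpotent ↥(I ⊔ J) :=
    (I ⊔ J).isNilpotent_iff_exists_selfLcs_eq_bot.2 ⟨2, LieIdeal.selfLcs_two_sup_eq_bot
      (LieIdeal.lie_self_eq_bot_of_isNilpotent hphi hI)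
      (LieIdeal.lie_self_eq_bot_of_isNilpotent hphi hJ)⟩
  rw [← LieIdeal.lie_self_eq_bot_of_isNilpotent hphi hsup]
  exact LieSubmodule.mono_lie le_sup_left le_sup_right

end FrattiniFree

namespace LieIdeal

variable {R L : Type*} [CommRing R] [LieRing L] [LieAlgebra R L]

def supMapDerivation (J : LieIdeal R L) (D : LieDerivation R L L) : LieIdeal R L where
  toSubmodule := J.toSubmodule ⊔ J.toSubmodule.map (D : L →ₗ[R] L)
  lie_mem {w x} hx := by
    obtain ⟨n, hn, _, ⟨m, hm, rfl⟩, rfl⟩ := Submodule.mem_sup.1 hx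
    have hexp : ⁅w, n + D m⁆ = (⁅w, n⁆ - ⁅D w, m⁆) + D ⁅w, m⁆ := by
      rw [D.apply_lie_eq_add, lie_add]; abel
    change ⁅w, n + D m⁆ ∈ J.toSubmodule ⊔ _
    rw [hexp]
    exact Submodule.add_mem_sup (sub_mem (J.lie_mem hn) (J.lie_mem hm))
      ⟨_, J.lie_mem hm, rfl⟩

variable {D : LieDerivation R L L} {J A : LieIdeal R L} {a b c : L}

theorem mem_supMapDerivation {x : L} :
    x ∈ J.supMapDerivation D ↔ ∃ n ∈ J, ∃ m ∈ J, n + D m = x := by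
  change x ∈ J.toSubmodule ⊔ _ ↔ _
  simp only [Submodule.mem_sup, Submodule.mem_map]
  constructor
  · rintro ⟨n, hn, _, ⟨m, hm, rfl⟩, rfl⟩; exact ⟨n, hn, m, hm, rfl⟩
  · rintro ⟨n, hn, m, hm, rfl⟩; exact ⟨n, hn, _, ⟨m, hm, rfl⟩, rfl⟩

theorem apply_mem_supMapDerivation {m : L} (hm : m ∈ J) : D m ∈ J.supMapDerivation D :=
  mem_supMapDerivation.2 ⟨0, J.zero_mem, m, hm, zero_add _⟩

theorem lie_eq_zero_of_lie_self_eq_bot (hA : ⁅A, A⁆ = ⊥) (ha : a ∈ A) (hb : b ∈ A) :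
    ⁅a, b⁆ = 0 :=
  (LieSubmodule.lie_eq_bot_iff A A).1 hA a ha b hb

theorem apply_lie_eq_neg_lie_apply (hA : ⁅A, A⁆ = ⊥) (ha : a ∈ A) (hb : b ∈ A) :
    ⁅D a, b⁆ = -⁅a, D b⁆ := by
  have h := D.apply_lie_eq_add a b
  rw [lie_eq_zero_of_lie_self_eq_bot hA ha hb, map_zero, eq_comm, add_comm] at h
  exact eq_neg_of_add_eq_zero_left h

theorem lie_apply_comm (hA : ⁅A, A⁆ = ⊥) (ha : a ∈ A) (hb : b ∈ A) : ⁅a, D b⁆ = ⁅b, D a⁆ := by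
  rw [← lie_skew b, apply_lie_eq_neg_lie_apply hA ha hb, neg_neg]

theorem lie_lie_apply (hA : ⁅A, A⁆ = ⊥) (w : L) (ha : a ∈ A) (hb : b ∈ A) :
    ⁅w, ⁅a, D b⁆⁆ = ⁅⁅w, a⁆, D b⁆ + ⁅a, D ⁅w, b⁆⁆ := by
  have hab : ⁅a, ⁅D w, b⁆⁆ = 0 := lie_eq_zero_of_lie_self_eq_bot hA ha (A.lie_mem hb)
  rw [leibniz_lie w a (D b), D.apply_lie_eq_add w b, lie_add, hab, add_zero]

theorem lie_apply_lie_apply_eq_zero (hA : ⁅A, A⁆ = ⊥) (h2 : IsUnit (2 : R)) (ha : a ∈ A)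
    (hb : b ∈ A) (hc : c ∈ A) : ⁅⁅a, D b⁆, D c⁆ = 0 := by
  -- the Jacobi identity for `D a, b, D c`, rewritten with the symmetry of `⁅x, D y⁆` on `A`
  have cycle : ∀ {x y z : L}, x ∈ A → y ∈ A → z ∈ A →
      ⁅⁅y, D z⁆, D x⁆ = ⁅⁅x, D y⁆, D z⁆ + ⁅⁅x, D z⁆, D y⁆ := by
    intro x y z hx hy hz
    have h := lie_lie_apply (D := D) hA (D x) hy hz
    rw [← lie_skew, apply_lie_eq_neg_lie_apply hA hx hy, neg_lie,
      apply_lie_eq_neg_lie_apply hA hx hz, map_neg, lie_neg,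
      lie_apply_comm hA hy (lie_mem_left _ _ A x _ hx), ← neg_add] at h
    exact neg_injective h
  have h := cycle hb ha hc
  rw [lie_apply_comm hA hb ha, cycle ha hb hc, ← add_assoc, right_eq_add, ← two_smul R] at h
  exact h2.smul_eq_zero.1 h

theorem lie_apply_eq_zero_of_mem_lie_supMapDerivation (hA : ⁅A, A⁆ = ⊥) (h2 : IsUnit (2 : R))
    {z m : L} (hz : z ∈ ⁅A, A.supMapDerivation D⁆) (hm : m ∈ A) : ⁅z, D m⁆ = 0 := by
  suffices (⁅A, A.supMapDerivation D⁆ : LieIdeal R L).toSubmodule ≤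
      LinearMap.ker (LieAlgebra.ad R L (D m)) by
    rw [← lie_skew, neg_eq_zero]
    exact this hz
  rw [LieSubmodule.lie_toSubmodule_le_iff]
  rintro a ha _ hx
  obtain ⟨n, hn, m', hm', rfl⟩ := mem_supMapDerivation.1 hx
  rw [LinearMap.mem_ker, LieAlgebra.ad_apply, lie_add, lie_eq_zero_of_lie_self_eq_bot hA ha hn,
    zero_add, ← lie_skew, lie_apply_lie_apply_eq_zero hA h2 ha hm' hm, neg_zero]

theorem isNilpotent_supMapDerivation (hA : ⁅A, A⁆ = ⊥) (h2 : IsUnit (2 : R)) :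
    LieRing.IsNilpotent (A.supMapDerivation D) := by
  set I := A.supMapDerivation D
  set Z : LieIdeal R L := ⁅A, I⁆
  set K : LieIdeal R L := A ⊔ Z.supMapDerivation D
  have hZA : Z ≤ A := LieSubmodule.lie_le_left A I
  have hZD : ∀ {z m : L}, z ∈ Z → m ∈ A → ⁅z, D m⁆ = 0 :=
    lie_apply_eq_zero_of_mem_lie_supMapDerivation hA h2
  have hII : ⁅I, I⁆ ≤ K := by
    rw [LieSubmodule.lie_le_iff]
    intro x hx y hy
    obtain ⟨n, hn, m, hm, rfl⟩ := mem_supMapDerivation.1 hx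
    obtain ⟨n', hn', m', hm', rfl⟩ := mem_supMapDerivation.1 hy
    have hexp : ⁅n + D m, n' + D m'⁆ =
        (⁅n, n' + D m'⁆ + ⁅D m, n'⁆ - ⁅m, D (D m')⁆) + D ⁅m, D m'⁆ := by
      simp only [lie_add, add_lie, D.apply_lie_eq_add m (D m')]; abel
    rw [hexp]
    refine add_mem (le_sup_left (a := A) ?_) (le_sup_right (a := A) ?_)
    · exact sub_mem (add_mem (lie_mem_left R L A _ _ hn) (A.lie_mem hn'))
        (lie_mem_left R L A _ _ hm)
    · exact apply_mem_supMapDerivation (LieSubmodule.lie_mem_lie hm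
        (apply_mem_supMapDerivation hm'))
  have hIK : ⁅I, K⁆ ≤ Z := by
    rw [LieSubmodule.lie_sup, sup_le_iff]
    refine ⟨(LieSubmodule.lie_comm I A).le, ?_⟩
    rw [LieSubmodule.lie_le_iff]
    intro x hx y hy
    obtain ⟨n, hn, m, hm, rfl⟩ := mem_supMapDerivation.1 hx
    obtain ⟨z, hz, z', hz', rfl⟩ := mem_supMapDerivation.1 hy
    have hDD : ⁅D m, D z'⁆ = ⁅z', D (D m)⁆ := by
      have h := D.apply_lie_eq_add z' (D m)
      rw [hZD hz' hm, map_zero, eq_comm, add_comm, add_eq_zero_iff_eq_neg] at h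
      rw [← lie_skew, h, neg_neg]
    rw [lie_add, add_lie n (D m) (D z'), lie_apply_comm hA hn (hZA hz'), hZD hz' hn, zero_add,
      hDD]
    exact add_mem (Z.lie_mem hz) (lie_mem_left R L Z _ _ hz')
  have hIZ : ⁅I, Z⁆ = ⊥ := by
    rw [LieSubmodule.lie_eq_bot_iff]
    intro x hx z hz
    obtain ⟨n, hn, m, hm, rfl⟩ := mem_supMapDerivation.1 hx
    rw [add_lie, lie_eq_zero_of_lie_self_eq_bot hA hn (hZA hz),
      apply_lie_eq_neg_lie_apply hA hm (hZA hz), lie_apply_comm hA hm (hZA hz), hZD hz hm,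
      neg_zero, zero_add]
  refine I.isNilpotent_iff_exists_selfLcs_eq_bot.2 ⟨3, eq_bot_iff.2 ?_⟩
  calc I.selfLcs 3 = ⁅I, ⁅I, ⁅I, I⁆⁆⁆ := rfl
    _ ≤ ⁅I, ⁅I, K⁆⁆ := LieSubmodule.mono_lie_right _ (LieSubmodule.mono_lie_right _ hII)
    _ ≤ ⁅I, Z⁆ := LieSubmodule.mono_lie_right _ hIK
    _ = ⊥ := hIZ

end LieIdeal

theorem stmt8_general {F L : Type*} [Field F] [LieRing L] [LieAlgebra F L]
    (p : ℕ) [CharP F p] (hp : 2 < p)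
    (hphi : lieFrattini F L = ⊥) (D : LieDerivation F L L) :
    ∀ x ∈ nilrad F L, D x ∈ nilrad F L := by
  have h2 : IsUnit (2 : F) := by
    refine IsUnit.mk0 _ fun h => ?_
    have := Nat.le_of_dvd two_pos ((CharP.cast_eq_zero_iff F p 2).1 (by exact_mod_cast h))
    omega
  have hle : (nilrad F L).supMapDerivation D ≤ nilrad F L :=
    le_sSup ((nilrad F L).isNilpotent_supMapDerivation (lie_nilrad_self_eq_bot hphi) h2)
  exact fun x hx => hle (LieIdeal.apply_mem_supMapDerivation hx)

/-- Char `p > 2`, `L` solvable and `φ`-free: the nilradical is a characteristic ideal. -/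
theorem stmt8 {F L : Type*} [Field F] [LieRing L] [LieAlgebra F L]
    [FiniteDimensional F L] [LieAlgebra.IsSolvable L] (p : ℕ) [CharP F p] (hp : 2 < p)
    (hphi : lieFrattini F L = ⊥) (D : LieDerivation F L L) :
    ∀ x ∈ nilrad F L, D x ∈ nilrad F L :=
  stmt8_general p hp hphi D
end

section
/- Let L be a finite-dimensional solvable Lie A-algebra (all nilpotent subalgebras abelian) that is primitive with unique minimal ideal A = N(L), and let M be a maximal subalgebra of L containing A. Then N(M) = A. -/
variable (F : Type*) [Field F]

/-! The minimal ideal `A` of the solvable algebra `L` is abelian, and a core-free maximal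
subalgebra `M₀` gives `L = A + M₀`, which forces `C_L(A) = A`. A nilpotent ideal of `M` maps to a
nilpotent, hence abelian, subalgebra `P` of `L` with `[P, A] ⊆ P`; then `[P + A, P + A] ⊆ P ∩ A` is
central in `P + A`, so `P + A` is nilpotent, hence abelian, and `P ⊆ C_L(A) = A`. Conversely `A` is
an abelian ideal of `M`. -/

theorem LieSubalgebra.lie_eq_zero_of_isLieAbelian {R L : Type*} [CommRing R] [LieRing L]
    [LieAlgebra R L] {K : LieSubalgebra R L} [IsLieAbelian K] {x y : L} (hx : x ∈ K) (hy : y ∈ K) :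
    ⁅x, y⁆ = 0 :=
  congrArg Subtype.val (trivial_lie_zero K K ⟨x, hx⟩ ⟨y, hy⟩)

theorem LieRing.isNilpotent_of_lie_lie_eq_zero {L : Type*} [LieRing L]
    (h : ∀ x y z : L, ⁅x, ⁅y, z⁆⁆ = 0) : LieRing.IsNilpotent L := by
  refine LieModule.IsNilpotent.mk_int ⟨2, le_bot_iff.mp ?_⟩
  have hcentral : ⁅(⊤ : LieIdeal ℤ L), (⊤ : LieIdeal ℤ L)⁆ ≤ LieModule.maxTrivSubmodule ℤ L L :=
    (LieSubmodule.lie_le_iff _ _ _).mpr fun x _ y _ z => h z x y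
  calc LieModule.lowerCentralSeries ℤ L L 2
      = ⁅(⊤ : LieIdeal ℤ L), ⁅(⊤ : LieIdeal ℤ L), (⊤ : LieIdeal ℤ L)⁆⁆ := rfl
    _ ≤ ⁅(⊤ : LieIdeal ℤ L), LieModule.maxTrivSubmodule ℤ L L⁆ :=
        LieSubmodule.mono_lie_right _ hcentral
    _ = ⊥ := LieModule.ideal_oper_maxTrivSubmodule_eq_bot ℤ L L ⊤

namespace LieIdeal

variable {R L : Type*} [CommRing R] [LieRing L] [LieAlgebra R L]

def supLieSubalgebra (I : LieIdeal R L) (K : LieSubalgebra R L) : LieSubalgebra R L where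
  toSubmodule := I.toSubmodule ⊔ K.toSubmodule
  lie_mem' {x y} hx hy := by
    obtain ⟨a, ha, k, hk, rfl⟩ := Submodule.mem_sup.mp hx
    obtain ⟨b, hb, l, hl, rfl⟩ := Submodule.mem_sup.mp hy
    rw [lie_add, add_lie a k l, ← add_assoc]
    exact add_mem
      (Submodule.mem_sup_left (add_mem (lie_mem_right R L I _ _ hb) (lie_mem_left R L I _ _ ha)))
      (Submodule.mem_sup_right (K.lie_mem hk hl))

theorem mem_supLieSubalgebra {I : LieIdeal R L} {K : LieSubalgebra R L} {x : L} :
    x ∈ I.supLieSubalgebra K ↔ ∃ a ∈ I, ∃ k ∈ K, a + k = x :=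
  Submodule.mem_sup

theorem lie_eq_zero_of_mem_ker {I : LieIdeal R L} {x y : L} (hx : x ∈ LieModule.ker R L I)
    (hy : y ∈ I) : ⁅x, y⁆ = 0 :=
  congrArg Subtype.val ((LieModule.mem_ker R L I x).mp hx ⟨y, hy⟩)

theorem lie_eq_zero_of_isLieAbelian {I : LieIdeal R L} [IsLieAbelian I] {x y : L} (hx : x ∈ I)
    (hy : y ∈ I) : ⁅x, y⁆ = 0 :=
  lie_eq_zero_of_mem_ker ((isLieAbelian_iff R L).mp ‹_› hx) hy

theorem lie_self_ne_self_of_ne_bot [LieAlgebra.IsSolvable L] {I : LieIdeal R L} (hI : I ≠ ⊥) :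
    ⁅I, I⁆ ≠ I := by
  intro hperfect
  have hconst : ∀ k, LieAlgebra.derivedSeriesOfIdeal R L k I = I := by
    intro k
    induction k with
    | zero => rfl
    | succ k ih => rw [LieAlgebra.derivedSeriesOfIdeal_succ, ih, hperfect]
  obtain ⟨k, hk⟩ := LieAlgebra.IsSolvable.solvable R L
  apply hI
  rw [eq_bot_iff, ← hk, ← hconst k]
  exact LieAlgebra.derivedSeriesOfIdeal_mono le_top k

/-- `M₀ ∩ C_L(A)` is an ideal of `L = A + M₀`, because `A` centralises it; being core-free, `M₀`
contains no such ideal but `0`. -/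
theorem ker_le_self_of_supLieSubalgebra_eq_top {A : LieIdeal R L} [IsLieAbelian A]
    {M₀ : LieSubalgebra R L} (hsup : A.supLieSubalgebra M₀ = ⊤)
    (hcore : ∀ I : LieIdeal R L, (I : Set L) ⊆ M₀ → I = ⊥) :
    LieModule.ker R L A ≤ A := by
  have hdecomp (x : L) : ∃ a ∈ A, ∃ m ∈ M₀, a + m = x :=
    mem_supLieSubalgebra.mp (hsup ▸ LieSubalgebra.mem_top x)
  let D : LieIdeal R L :=
    { toSubmodule := M₀.toSubmodule ⊓ (LieModule.ker R L A).toSubmodule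
      lie_mem := by
        rintro z y ⟨hyM, hyC⟩
        obtain ⟨a, ha, m, hm, rfl⟩ := hdecomp z
        refine ⟨?_, lie_mem_right R L _ _ _ hyC⟩
        have hay : ⁅a, y⁆ = 0 := by rw [← lie_skew, lie_eq_zero_of_mem_ker hyC ha, neg_zero]
        change ⁅a + m, y⁆ ∈ M₀
        rw [add_lie, hay, zero_add]
        exact M₀.lie_mem hm hyM }
  have hD : D = ⊥ := hcore D fun y hy => hy.1
  intro x hx
  obtain ⟨a, ha, m, hm, rfl⟩ := hdecomp x
  have hmC : m ∈ LieModule.ker R L A := by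
    rw [show m = (a + m) - a by abel]
    exact sub_mem hx ((isLieAbelian_iff R L).mp ‹_› ha)
  have hmD : m ∈ D := ⟨hm, hmC⟩
  rw [hD, LieSubmodule.mem_bot] at hmD
  rwa [hmD, add_zero]

theorem isLieAbelian_comap_incl (A : LieIdeal R L) [IsLieAbelian A] (M : LieSubalgebra R L) :
    IsLieAbelian (A.comap M.incl) :=
  ⟨fun x y => Subtype.ext (Subtype.ext (lie_eq_zero_of_isLieAbelian x.2 y.2))⟩

theorem isNilpotent_supLieSubalgebra {A : LieIdeal R L} [IsLieAbelian A] {P : LieSubalgebra R L}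
    [IsLieAbelian P] (hPA : ∀ p ∈ P, ∀ b ∈ A, ⁅p, b⁆ ∈ P) :
    LieRing.IsNilpotent (A.supLieSubalgebra P) := by
  have hP {x y : L} (hx : x ∈ P) (hy : y ∈ P) : ⁅x, y⁆ = 0 :=
    LieSubalgebra.lie_eq_zero_of_isLieAbelian hx hy
  have hA {x y : L} (hx : x ∈ A) (hy : y ∈ A) : ⁅x, y⁆ = 0 := lie_eq_zero_of_isLieAbelian hx hy
  have hbracket : ∀ y ∈ A.supLieSubalgebra P, ∀ z ∈ A.supLieSubalgebra P,
      ⁅y, z⁆ ∈ P ∧ ⁅y, z⁆ ∈ A := by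
    intro y hy z hz
    obtain ⟨b, hb, p, hp, rfl⟩ := mem_supLieSubalgebra.mp hy
    obtain ⟨c, hc, q, hq, rfl⟩ := mem_supLieSubalgebra.mp hz
    have hexpand : ⁅b + p, c + q⁆ = ⁅p, c⁆ - ⁅q, b⁆ := by
      rw [lie_add, add_lie, add_lie, hA hb hc, hP hp hq, ← lie_skew q b]
      abel
    rw [hexpand]
    exact ⟨sub_mem (hPA p hp c hc) (hPA q hq b hb),
      sub_mem (lie_mem_right R L A _ _ hc) (lie_mem_right R L A _ _ hb)⟩
  apply LieRing.isNilpotent_of_lie_lie_eq_zero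
  rintro ⟨x, hx⟩ ⟨y, hy⟩ ⟨z, hz⟩
  obtain ⟨hyzP, hyzA⟩ := hbracket y hy z hz
  obtain ⟨a, ha, p, hp, rfl⟩ := mem_supLieSubalgebra.mp hx
  apply Subtype.ext
  change ⁅a + p, ⁅y, z⁆⁆ = 0
  rw [add_lie, hA ha hyzA, hP hp hyzP, add_zero]

end LieIdeal

def LieAlgebra.IsAAlgebra (R L : Type*) [CommRing R] [LieRing L] [LieAlgebra R L] : Prop :=
  ∀ S : LieSubalgebra R L, LieRing.IsNilpotent S → IsLieAbelian S

namespace LieAlgebra.IsAAlgebra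

variable {R L : Type*} [CommRing R] [LieRing L] [LieAlgebra R L]

theorem toSubmodule_le_of_lie_mem (hL : IsAAlgebra R L) {A : LieIdeal R L} [IsLieAbelian A]
    (hcent : LieModule.ker R L A ≤ A) {P : LieSubalgebra R L} [LieRing.IsNilpotent P]
    (hPA : ∀ p ∈ P, ∀ b ∈ A, ⁅p, b⁆ ∈ P) : P.toSubmodule ≤ A.toSubmodule := by
  have := hL P ‹_›
  have := hL _ (LieIdeal.isNilpotent_supLieSubalgebra hPA)
  intro p hp
  refine hcent ((LieModule.mem_ker R L A p).mpr fun b => Subtype.ext ?_)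
  exact LieSubalgebra.lie_eq_zero_of_isLieAbelian (K := A.supLieSubalgebra P)
    (Submodule.mem_sup_right hp) (Submodule.mem_sup_left b.2)

theorem le_comap_incl (hL : IsAAlgebra R L) {A : LieIdeal R L} [IsLieAbelian A]
    (hcent : LieModule.ker R L A ≤ A) {M : LieSubalgebra R L} (hAM : (A : Set L) ⊆ M)
    (I : LieIdeal R M) [LieRing.IsNilpotent I] : I ≤ A.comap M.incl := by
  let f := M.incl.comp I.incl
  have := f.isNilpotent_range
  have hPA : ∀ p ∈ f.range, ∀ b ∈ A, ⁅p, b⁆ ∈ f.range := by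
    rintro _ ⟨i, rfl⟩ b hb
    exact ⟨⟨⁅(i : M), ⟨b, hAM hb⟩⁆, lie_mem_left R M I _ _ i.2⟩, rfl⟩
  intro z hz
  exact hL.toSubmodule_le_of_lie_mem hcent hPA ⟨⟨z, hz⟩, rfl⟩

end LieAlgebra.IsAAlgebra

theorem IsMinIdeal.isLieAbelian {F L : Type*} [Field F] [LieRing L] [LieAlgebra F L]
    [LieAlgebra.IsSolvable L] {A : LieIdeal F L} (hA : IsMinIdeal F A) : IsLieAbelian A :=
  (LieSubmodule.lie_abelian_iff_lie_self_eq_bot A).mpr <| hA.2 _ <|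
    lt_of_le_of_ne (LieSubmodule.lie_le_left A A) (LieIdeal.lie_self_ne_self_of_ne_bot hA.1)

theorem IsMaxSub.supLieSubalgebra_eq_top {F L : Type*} [Field F] [LieRing L] [LieAlgebra F L]
    {M : LieSubalgebra F L} (hM : IsMaxSub F M) {A : LieIdeal F L} (hA : ¬(A : Set L) ⊆ M) :
    A.supLieSubalgebra M = ⊤ :=
  hM.2 _ <| lt_of_le_not_ge (fun _ hx => Submodule.mem_sup_right hx)
    fun h => hA fun _ ha => h (Submodule.mem_sup_left ha)

theorem stmt19_general {F L : Type*} [Field F] [LieRing L] [LieAlgebra F L]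
    [LieAlgebra.IsSolvable L]
    (hAalg : ∀ S : LieSubalgebra F L, LieRing.IsNilpotent S → IsLieAbelian S)
    (A : LieIdeal F L) (hmin : IsMinIdeal F A)
    (hprim : ∃ M₀ : LieSubalgebra F L, IsMaxSub F M₀ ∧
      ∀ I : LieIdeal F L, (I : Set L) ⊆ (M₀ : Set L) → I = ⊥)
    (M : LieSubalgebra F L) (hAM : (A : Set L) ⊆ (M : Set L)) :
    ∀ x : M, x ∈ nilrad F M ↔ (x : L) ∈ A := by
  obtain ⟨M₀, hM₀, hcore⟩ := hprim
  have := hmin.isLieAbelian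
  have hcent : LieModule.ker F L A ≤ A :=
    A.ker_le_self_of_supLieSubalgebra_eq_top
      (hM₀.supLieSubalgebra_eq_top fun h => hmin.1 (hcore A h)) hcore
  suffices nilrad F M = A.comap M.incl from fun x => by rw [this]; rfl
  refine le_antisymm (sSup_le fun I hI => ?_) (le_sSup ?_)
  · have : LieRing.IsNilpotent I := hI
    exact LieAlgebra.IsAAlgebra.le_comap_incl hAalg hcent hAM I
  · have := A.isLieAbelian_comap_incl M
    show LieRing.IsNilpotent (A.comap M.incl)
    infer_instance

/-- If `L` is a solvable `A`-algebra which is primitive with unique minimal ideal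
`A = N(L)`, and `M` is a maximal subalgebra containing `A`, then `N(M) = A`. -/
theorem stmt19 {F L : Type*} [Field F] [LieRing L] [LieAlgebra F L]
    [FiniteDimensional F L] [LieAlgebra.IsSolvable L]
    (hAalg : ∀ S : LieSubalgebra F L, LieRing.IsNilpotent S → IsLieAbelian S)
    (A : LieIdeal F L) (hAN : A = nilrad F L) (hmin : IsMinIdeal F A)
    (huniq : ∀ B : LieIdeal F L, IsMinIdeal F B → B = A)
    (hprim : ∃ M₀ : LieSubalgebra F L, IsMaxSub F M₀ ∧
      ∀ I : LieIdeal F L, (I : Set L) ⊆ (M₀ : Set L) → I = ⊥)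
    (M : LieSubalgebra F L) (hM : IsMaxSub F M) (hAM : (A : Set L) ⊆ (M : Set L)) :
    ∀ x : M, x ∈ nilrad F M ↔ (x : L) ∈ A :=
  stmt19_general hAalg A hmin hprim M hAM
end
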